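/- Law of total variance for episodic MDPs: for any finite-horizon MDP with transition kernel p, rewards in [0,1], horizon H, and any policy π, the occupancy-weighted sum of conditional next-state value variances satisfies ∑_{s,a,h} q_{s,a,h}^{p,π} · Var_{s'∼p(·|s,a,h)}(V_{h+1}^π(s')) = E_π[(∑_{h=1}^H r(s_h, π(s_h,h), h) − V₁^π(s₁))²] ≤ H². -/
import Mathlib
set_option linter.unusedSectionVars false


/-- Value function with `n` remaining steps, current step `h` (0-indexed). -/
noncomputable def valAux {S A : Type*} [Fintype S]
    (p : S → A → ℕ → S → ℝ) (r : S → A → ℕ → ℝ) (π : S → ℕ → A) :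
    ℕ → ℕ → S → ℝ
  | 0, _, _ => 0
  | n + 1, h, s =>
      r s (π s h) h + ∑ s' : S, p s (π s h) h s' * valAux p r π n (h + 1) s'

/-- `V_h^{p,π}(s)` in an episodic MDP with horizon `H` (steps `0,…,H-1`). -/
noncomputable def val {S A : Type*} [Fintype S]
    (p : S → A → ℕ → S → ℝ) (r : S → A → ℕ → ℝ) (π : S → ℕ → A)
    (H h : ℕ) (s : S) : ℝ :=
  valAux p r π (H - h) h s

/-- State-occupancy: probability of being in state `s` at step `n`
starting from `s₁` at step `0` and following `π` under `p`. -/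
noncomputable def occ {S A : Type*} [Fintype S] [DecidableEq S]
    (p : S → A → ℕ → S → ℝ) (π : S → ℕ → A) (s₁ : S) :
    ℕ → S → ℝ
  | 0, s => if s = s₁ then 1 else 0
  | n + 1, s => ∑ s' : S, occ p π s₁ n s' * p s' (π s' n) n s

/-- Probability of a trajectory `τ 0, τ 1, …, τ H` under policy `π`, kernel `p`,
starting from `s₁`. -/
noncomputable def trajProb {S A : Type*} [Fintype S] [DecidableEq S]
    (p : S → A → ℕ → S → ℝ) (π : S → ℕ → A) (s₁ : S) (H : ℕ)
    (τ : Fin (H + 1) → S) : ℝ :=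
  (if τ 0 = s₁ then 1 else 0) *
    ∏ h : Fin H, p (τ h.castSucc) (π (τ h.castSucc) h.val) h.val (τ h.succ)

section LTV

variable {S A : Type*} [Fintype S] [DecidableEq S]
variable (p : S → A → ℕ → S → ℝ) (r : S → A → ℕ → ℝ) (π : S → ℕ → A)

noncomputable def mtwo : ℕ → ℕ → S → ℝ
  | 0, _, _ => 0
  | n + 1, h, s => ∑ s' : S, p s (π s h) h s' *
      ((r s (π s h) h) ^ 2 + 2 * r s (π s h) h * valAux p r π n (h + 1) s'
        + mtwo n (h + 1) s')

noncomputable def EF : (ℝ → ℝ) → ℕ → ℕ → S → ℝ → ℝ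
  | F, 0, _, _, c => F c
  | F, n + 1, h, s, c => ∑ s' : S, p s (π s h) h s' * EF F n (h + 1) s' (c + r s (π s h) h)

noncomputable def tp (h : ℕ) (s : S) (n : ℕ) (τ : Fin (n + 1) → S) : ℝ :=
  (if τ 0 = s then 1 else 0) *
    ∏ t : Fin n, p (τ t.castSucc) (π (τ t.castSucc) (h + t.val)) (h + t.val) (τ t.succ)

lemma tp_EF (F : ℝ → ℝ) : ∀ (n h : ℕ) (s : S) (c : ℝ),
    (∑ τ : Fin (n + 1) → S, tp p π h s n τ *
      F (c + ∑ t : Fin n, r (τ t.castSucc) (π (τ t.castSucc) (h + t.val)) (h + t.val)))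
      = EF p r π F n h s c := by
  intro n
  induction n with
  | zero =>
    intro h s c
    rw [← (Equiv.funUnique (Fin 1) S).symm.sum_comp]
    simp [tp, EF]
  | succ n ih =>
    intro h s c
    set R := r s (π s h) h with hR
    have key : ∀ σ : Fin (n + 1) → S,
        (p s (π s h) h (σ 0) *
            ∏ t : Fin n, p (σ t.castSucc) (π (σ t.castSucc) (h + 1 + ↑t)) (h + 1 + ↑t) (σ t.succ)) *
          F (c + (R + ∑ t : Fin n, r (σ t.castSucc) (π (σ t.castSucc) (h + 1 + ↑t)) (h + 1 + ↑t)))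
        = ∑ s' : S, p s (π s h) h s' * (tp p π (h + 1) s' n σ *
            F (c + R
              + ∑ t : Fin n, r (σ t.castSucc) (π (σ t.castSucc) (h + 1 + ↑t)) (h + 1 + ↑t))) := by
      intro σ
      simp only [tp, ite_mul, one_mul, zero_mul, mul_ite, mul_zero, Finset.sum_ite_eq,
        Finset.mem_univ, if_true, add_assoc]
      ring
    rw [← (Fin.consEquiv fun _ => S).sum_comp, Fintype.sum_prod_type]
    simp only [Fin.consEquiv_apply, tp, Fin.cons_zero, Fin.prod_univ_succ, Fin.sum_univ_succ,
      Fin.castSucc_zero, Fin.cons_succ, ← Fin.succ_castSucc, Fin.val_succ, Fin.val_zero, add_zero]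
    simp only [show ∀ t : Fin n, h + (↑t + 1) = (h + 1) + ↑t from fun t => by omega]
    simp only [ite_mul, zero_mul, Finset.sum_ite_irrel, Finset.sum_const_zero,
      Finset.sum_ite_eq', Finset.mem_univ, if_true, one_mul]
    show (∑ σ : Fin (n + 1) → S, _) = ∑ s' : S, p s (π s h) h s' * EF p r π F n (h + 1) s' (c + R)
    rw [Finset.sum_congr rfl fun σ _ => key σ, Finset.sum_comm]
    refine Finset.sum_congr rfl fun s' _ => ?_
    rw [← ih, Finset.mul_sum]

variable {p r}

lemma EF_one (hp1 : ∀ s a h, ∑ s' : S, p s a h s' = 1) :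
    ∀ (n h : ℕ) (s : S) (c : ℝ), EF p r π (fun _ => (1:ℝ)) n h s c = 1 := by
  intro n
  induction n with
  | zero => intro h s c; simp [EF]
  | succ n ih => intro h s c; simp [EF, ih, hp1]

lemma EF_sq (hp1 : ∀ s a h, ∑ s' : S, p s a h s' = 1) :
    ∀ (n h : ℕ) (s : S) (c : ℝ),
      EF p r π (fun x => x ^ 2) n h s c
        = c ^ 2 + 2 * c * valAux p r π n h s + mtwo p r π n h s := by
  intro n
  induction n with
  | zero => intro h s c; simp [EF, valAux, mtwo]
  | succ n ih =>
    intro h s c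
    have key : ∀ s' : S,
        p s (π s h) h s' * EF p r π (fun x => x ^ 2) n (h + 1) s' (c + r s (π s h) h)
          = (c ^ 2 + 2 * c * r s (π s h) h) * p s (π s h) h s'
            + 2 * c * (p s (π s h) h s' * valAux p r π n (h + 1) s')
            + p s (π s h) h s' * ((r s (π s h) h) ^ 2
                + 2 * r s (π s h) h * valAux p r π n (h + 1) s' + mtwo p r π n (h + 1) s') := by
      intro s'; rw [ih]; ring
    show (∑ s' : S, _) = _
    rw [Finset.sum_congr rfl fun s' _ => key s', Finset.sum_add_distrib,
      Finset.sum_add_distrib, ← Finset.mul_sum, ← Finset.mul_sum, hp1, mul_one]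
    show _ = _ + 2 * c * valAux p r π (n+1) h s + mtwo p r π (n+1) h s
    simp only [valAux, mtwo]
    ring

lemma G_step (hp1 : ∀ s a h, ∑ s' : S, p s a h s' = 1) (n h : ℕ) (s : S) :
    mtwo p r π (n + 1) h s - (valAux p r π (n + 1) h s) ^ 2
      = ((∑ s' : S, p s (π s h) h s' * (valAux p r π n (h + 1) s') ^ 2)
          - (∑ s' : S, p s (π s h) h s' * valAux p r π n (h + 1) s') ^ 2)
        + ∑ s' : S, p s (π s h) h s' *
            (mtwo p r π n (h + 1) s' - (valAux p r π n (h + 1) s') ^ 2) := by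
  have e1 : mtwo p r π (n + 1) h s
      = (r s (π s h) h) ^ 2 + 2 * r s (π s h) h *
          (∑ s' : S, p s (π s h) h s' * valAux p r π n (h + 1) s')
        + ∑ s' : S, p s (π s h) h s' * mtwo p r π n (h + 1) s' := by
    have step : ∀ s' : S, p s (π s h) h s' * ((r s (π s h) h) ^ 2
          + 2 * r s (π s h) h * valAux p r π n (h + 1) s' + mtwo p r π n (h + 1) s')
        = (r s (π s h) h) ^ 2 * p s (π s h) h s'
          + 2 * r s (π s h) h * (p s (π s h) h s' * valAux p r π n (h + 1) s')
          + p s (π s h) h s' * mtwo p r π n (h + 1) s' := fun s' => by ring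
    show (∑ s' : S, _) = _
    rw [Finset.sum_congr rfl fun s' _ => step s', Finset.sum_add_distrib,
      Finset.sum_add_distrib, ← Finset.mul_sum, ← Finset.mul_sum, hp1, mul_one]
  have e2 : (∑ s' : S, p s (π s h) h s' *
      (mtwo p r π n (h + 1) s' - (valAux p r π n (h + 1) s') ^ 2))
      = (∑ s' : S, p s (π s h) h s' * mtwo p r π n (h + 1) s')
        - ∑ s' : S, p s (π s h) h s' * (valAux p r π n (h + 1) s') ^ 2 := by
    rw [← Finset.sum_sub_distrib]
    exact Finset.sum_congr rfl fun s' _ => by ring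
  rw [e1, e2]
  show _ - (r s (π s h) h + ∑ s' : S, p s (π s h) h s' * valAux p r π n (h + 1) s') ^ 2 = _
  ring


lemma valAux_nonneg (hp0 : ∀ s a h s', 0 ≤ p s a h s')
    (hr : ∀ s a h, r s a h ∈ Set.Icc (0:ℝ) 1) :
    ∀ (n h : ℕ) (s : S), 0 ≤ valAux p r π n h s := by
  intro n
  induction n with
  | zero => intro h s; simp [valAux]
  | succ n ih =>
    intro h s
    have : (0:ℝ) ≤ ∑ s' : S, p s (π s h) h s' * valAux p r π n (h + 1) s' :=
      Finset.sum_nonneg fun s' _ => mul_nonneg (hp0 _ _ _ _) (ih _ _)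
    have hr0 := (hr s (π s h) h).1
    show (0:ℝ) ≤ r s (π s h) h + _
    linarith

lemma valAux_le (hp0 : ∀ s a h s', 0 ≤ p s a h s')
    (hp1 : ∀ s a h, ∑ s' : S, p s a h s' = 1)
    (hr : ∀ s a h, r s a h ∈ Set.Icc (0:ℝ) 1) :
    ∀ (n h : ℕ) (s : S), valAux p r π n h s ≤ (n : ℝ) := by
  intro n
  induction n with
  | zero => intro h s; simp [valAux]
  | succ n ih =>
    intro h s
    have h1 : (∑ s' : S, p s (π s h) h s' * valAux p r π n (h + 1) s') ≤ (n : ℝ) := by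
      calc (∑ s' : S, p s (π s h) h s' * valAux p r π n (h + 1) s')
          ≤ ∑ s' : S, p s (π s h) h s' * (n : ℝ) :=
            Finset.sum_le_sum fun s' _ => mul_le_mul_of_nonneg_left (ih _ _) (hp0 _ _ _ _)
        _ = (n : ℝ) := by rw [← Finset.sum_mul, hp1, one_mul]
    have h2 := (hr s (π s h) h).2
    show r s (π s h) h + _ ≤ _
    push_cast
    linarith

lemma tele (hp1 : ∀ s a h, ∑ s' : S, p s a h s' = 1) (s₁ : S) (H : ℕ) :
    ∀ k, k ≤ H →
    (∑ h ∈ Finset.range k, ∑ s : S, occ p π s₁ h s *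
        ((∑ s' : S, p s (π s h) h s' * (valAux p r π (H - (h + 1)) (h + 1) s') ^ 2)
          - (∑ s' : S, p s (π s h) h s' * valAux p r π (H - (h + 1)) (h + 1) s') ^ 2))
      + (∑ s : S, occ p π s₁ k s *
          (mtwo p r π (H - k) k s - (valAux p r π (H - k) k s) ^ 2))
      = mtwo p r π H 0 s₁ - (valAux p r π H 0 s₁) ^ 2 := by
  intro k
  induction k with
  | zero =>
    intro _
    simp [occ, ite_mul, zero_mul, Finset.sum_ite_eq', Finset.mem_univ]
  | succ k ih =>
    intro hk
    have hk' : k ≤ H := by omega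
    have hm : H - k = (H - (k + 1)) + 1 := by omega
    rw [Finset.sum_range_succ, ← ih hk']
    have key : (∑ s : S, occ p π s₁ k s *
          ((∑ s' : S, p s (π s k) k s' * (valAux p r π (H - (k + 1)) (k + 1) s') ^ 2)
            - (∑ s' : S, p s (π s k) k s' * valAux p r π (H - (k + 1)) (k + 1) s') ^ 2))
        + (∑ s : S, occ p π s₁ (k + 1) s *
            (mtwo p r π (H - (k + 1)) (k + 1) s - (valAux p r π (H - (k + 1)) (k + 1) s) ^ 2))
        = ∑ s : S, occ p π s₁ k s *
            (mtwo p r π (H - k) k s - (valAux p r π (H - k) k s) ^ 2) := by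
      have step : ∀ s : S, occ p π s₁ k s *
            (mtwo p r π (H - k) k s - (valAux p r π (H - k) k s) ^ 2)
          = occ p π s₁ k s *
              ((∑ s' : S, p s (π s k) k s' * (valAux p r π (H - (k + 1)) (k + 1) s') ^ 2)
                - (∑ s' : S, p s (π s k) k s' * valAux p r π (H - (k + 1)) (k + 1) s') ^ 2)
            + ∑ s' : S, (occ p π s₁ k s * p s (π s k) k s') *
                (mtwo p r π (H - (k + 1)) (k + 1) s'
                  - (valAux p r π (H - (k + 1)) (k + 1) s') ^ 2) := by
        intro s
        rw [hm, G_step π hp1, mul_add, Finset.mul_sum]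
        congr 1
        exact Finset.sum_congr rfl fun s' _ => by ring
      rw [Finset.sum_congr rfl fun s _ => step s, Finset.sum_add_distrib]
      congr 1
      rw [Finset.sum_comm]
      refine Finset.sum_congr rfl fun s' _ => ?_
      rw [show (occ p π s₁ (k + 1) s') = ∑ s : S, occ p π s₁ k s * p s (π s k) k s' from rfl,
        Finset.sum_mul]
    linarith [key]

end LTV

/-- Law of total variance for episodic MDPs: the occupancy-weighted sum of
conditional next-state value variances equals
`E_π[(∑_h r(s_h,π(s_h,h),h) − V₁^π(s₁))²]`, which is at most `H²`. -/
theorem law_of_total_variance {S A : Type*} [Fintype S] [Fintype A]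
    [DecidableEq S] [DecidableEq A]
    (H : ℕ) (p : S → A → ℕ → S → ℝ) (r : S → A → ℕ → ℝ)
    (π : S → ℕ → A) (s₁ : S)
    (hp0 : ∀ s a h s', 0 ≤ p s a h s')
    (hp1 : ∀ s a h, ∑ s' : S, p s a h s' = 1)
    (hr : ∀ s a h, r s a h ∈ Set.Icc (0:ℝ) 1) :
    (∑ h ∈ Finset.range H, ∑ s : S, ∑ a : A,
        (if π s h = a then occ p π s₁ h s else 0) *
          ((∑ s' : S, p s a h s' * (val p r π H (h + 1) s') ^ 2) -
            (∑ s' : S, p s a h s' * val p r π H (h + 1) s') ^ 2)) =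
      (∑ τ : Fin (H + 1) → S, trajProb p π s₁ H τ *
        ((∑ h : Fin H, r (τ h.castSucc) (π (τ h.castSucc) h.val) h.val) -
          val p r π H 0 s₁) ^ 2) ∧
    (∑ τ : Fin (H + 1) → S, trajProb p π s₁ H τ *
        ((∑ h : Fin H, r (τ h.castSucc) (π (τ h.castSucc) h.val) h.val) -
          val p r π H 0 s₁) ^ 2) ≤ (H : ℝ) ^ 2 := by
  have hV : val p r π H 0 s₁ = valAux p r π H 0 s₁ := by simp [val]
  have htraj : ∀ τ : Fin (H + 1) → S, trajProb p π s₁ H τ = tp p π 0 s₁ H τ := by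
    intro τ; simp [trajProb, tp]
  have hRHS : (∑ τ : Fin (H + 1) → S, trajProb p π s₁ H τ *
        ((∑ h : Fin H, r (τ h.castSucc) (π (τ h.castSucc) h.val) h.val) -
          val p r π H 0 s₁) ^ 2)
      = mtwo p r π H 0 s₁ - (valAux p r π H 0 s₁) ^ 2 := by
    have h1 := tp_EF p r π (fun x => x ^ 2) H 0 s₁ (-(valAux p r π H 0 s₁))
    rw [EF_sq π hp1] at h1
    have h2 : (∑ τ : Fin (H + 1) → S, trajProb p π s₁ H τ *
          ((∑ h : Fin H, r (τ h.castSucc) (π (τ h.castSucc) h.val) h.val) -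
            val p r π H 0 s₁) ^ 2)
        = ∑ τ : Fin (H + 1) → S, tp p π 0 s₁ H τ *
            (fun x => x ^ 2) (-(valAux p r π H 0 s₁)
              + ∑ t : Fin H, r (τ t.castSucc) (π (τ t.castSucc) (0 + t.val)) (0 + t.val)) := by
      refine Finset.sum_congr rfl fun τ _ => ?_
      rw [htraj τ, hV]
      simp only [zero_add]
      ring_nf
    rw [h2, h1]
    ring
  have hsumr0 : ∀ τ : Fin (H + 1) → S,
      (0:ℝ) ≤ ∑ h : Fin H, r (τ h.castSucc) (π (τ h.castSucc) h.val) h.val :=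
    fun τ => Finset.sum_nonneg fun t _ => (hr _ _ _).1
  have hsumr1 : ∀ τ : Fin (H + 1) → S,
      (∑ h : Fin H, r (τ h.castSucc) (π (τ h.castSucc) h.val) h.val) ≤ (H : ℝ) := by
    intro τ
    calc (∑ h : Fin H, r (τ h.castSucc) (π (τ h.castSucc) h.val) h.val)
        ≤ ∑ _h : Fin H, (1:ℝ) := Finset.sum_le_sum fun t _ => (hr _ _ _).2
      _ = (H : ℝ) := by simp
  have hV0 : 0 ≤ val p r π H 0 s₁ := by
    rw [hV]; exact valAux_nonneg π hp0 hr H 0 s₁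
  have hV1 : val p r π H 0 s₁ ≤ (H : ℝ) := by
    rw [hV]; exact valAux_le π hp0 hp1 hr H 0 s₁
  have htrajnn : ∀ τ : Fin (H + 1) → S, 0 ≤ trajProb p π s₁ H τ := by
    intro τ
    refine mul_nonneg ?_ (Finset.prod_nonneg fun t _ => hp0 _ _ _ _)
    split <;> norm_num
  have htot : (∑ τ : Fin (H + 1) → S, trajProb p π s₁ H τ) = 1 := by
    have h1 := tp_EF p r π (fun _ => (1:ℝ)) H 0 s₁ 0
    rw [EF_one π hp1] at h1
    rw [← h1]
    exact Finset.sum_congr rfl fun τ _ => by rw [htraj τ, mul_one]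
  constructor
  · rw [hRHS]
    have hL : (∑ h ∈ Finset.range H, ∑ s : S, ∑ a : A,
          (if π s h = a then occ p π s₁ h s else 0) *
            ((∑ s' : S, p s a h s' * (val p r π H (h + 1) s') ^ 2) -
              (∑ s' : S, p s a h s' * val p r π H (h + 1) s') ^ 2))
        = ∑ h ∈ Finset.range H, ∑ s : S, occ p π s₁ h s *
            ((∑ s' : S, p s (π s h) h s' * (valAux p r π (H - (h + 1)) (h + 1) s') ^ 2)
              - (∑ s' : S, p s (π s h) h s' * valAux p r π (H - (h + 1)) (h + 1) s') ^ 2) := by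
      refine Finset.sum_congr rfl fun h _ => Finset.sum_congr rfl fun s _ => ?_
      simp only [val, ite_mul, zero_mul, Finset.sum_ite_eq, Finset.mem_univ, if_true]
    rw [hL]
    have ht := tele (p := p) (r := r) π hp1 s₁ H H le_rfl
    simpa [mtwo, valAux] using ht
  · calc (∑ τ : Fin (H + 1) → S, trajProb p π s₁ H τ *
          ((∑ h : Fin H, r (τ h.castSucc) (π (τ h.castSucc) h.val) h.val) -
            val p r π H 0 s₁) ^ 2)
        ≤ ∑ τ : Fin (H + 1) → S, trajProb p π s₁ H τ * (H : ℝ) ^ 2 := by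
          refine Finset.sum_le_sum fun τ _ => mul_le_mul_of_nonneg_left ?_ (htrajnn τ)
          have := hsumr0 τ
          have := hsumr1 τ
          apply sq_le_sq' <;> linarith
      _ = (H : ℝ) ^ 2 := by rw [← Finset.sum_mul, htot, one_mul]
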